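/- arXiv:2605.31491 — 4 statements merged into one kernel-verified Lean document; each statement's English description precedes it below -/
import Mathlib

section
/- Let s1 ≤ s2 ≤ s3 be nonnegative integers and let p = max(0, s1 + s2 − s3). Then the number of triples (x,y,z) of nonnegative integers satisfying y+z ≤ s1, x+z ≤ s2, and x+y ≤ s3 equals (s1+1)(s1+2)(3·s2 − s1 + 3)/6 − p(p+2)(2p+5)/24 − (1 − (−1)^p)/16. -/
open Finset

lemma sumD (n : ℕ) : ∀ p : ℕ, p ≤ 2*n+1 →
    ∑ z ∈ range (n+1), (p - 2*z) = (p+1)^2/4 := by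
  induction n with
  | zero =>
    intro p hp
    interval_cases p <;> simp
  | succ n ih =>
    intro p hp
    rw [Finset.sum_range_succ']
    have h1 : ∑ i ∈ range (n+1), (p - 2*(i+1)) = ∑ i ∈ range (n+1), ((p-2) - 2*i) := by
      apply Finset.sum_congr rfl; intro i _; omega
    rw [h1, ih (p-2) (by omega)]
    rcases Nat.lt_or_ge p 2 with h | h
    · interval_cases p <;> simp
    · obtain ⟨q, rfl⟩ : ∃ q, p = q + 2 := ⟨p - 2, by omega⟩
      have h2 : (q+2+1)^2 = (q+2-2+1)^2 + 4*(q+2) := by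
        have h3 : q+2-2 = q := by omega
        rw [h3]; ring
      omega

lemma sumB (s2 : ℕ) : ∀ n : ℕ, n ≤ s2 →
    ((∑ z ∈ range (n+1), (s2 - z + 1) : ℕ) : ℚ) = (n+1)*(2*s2+2-n)/2 := by
  intro n hn
  induction n with
  | zero => simp; ring
  | succ n ih =>
    rw [Finset.sum_range_succ, Nat.cast_add, ih (by omega),
      Nat.cast_add, Nat.cast_sub (show n+1 ≤ s2 by omega)]
    push_cast
    ring

lemma sumA (s2 : ℕ) : ∀ s1 : ℕ, s1 ≤ s2 →
    ((∑ y ∈ range (s1+1), ∑ z ∈ range (s1+1-y), (s2 - z + 1) : ℕ) : ℚ)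
      = ((s1:ℚ)+1)*((s1:ℚ)+2)*(3*(s2:ℚ)-(s1:ℚ)+3)/6 := by
  intro s1
  induction s1 with
  | zero => intro _; simp; push_cast; ring
  | succ n ih =>
    intro h
    rw [Finset.sum_range_succ']
    have h1 : (∑ i ∈ range (n+1), ∑ z ∈ range (n+1+1-(i+1)), (s2 - z + 1))
        = ∑ i ∈ range (n+1), ∑ z ∈ range (n+1-i), (s2 - z + 1) := by
      apply Finset.sum_congr rfl
      intro i _
      have : n+1+1-(i+1) = n+1-i := by omega
      rw [this]
    rw [h1, Nat.cast_add, ih (by omega)]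
    have h2 : n+1+1-0 = (n+1)+1 := by omega
    rw [h2, sumB s2 (n+1) h]
    push_cast
    ring

lemma innerSumK3 (s1 s2 s3 y z : ℕ) (h12 : s1 ≤ s2) (h23 : s2 ≤ s3)
    (hy : y ≤ s1) (hz : z ≤ s1) :
    (∑ x ∈ range (s3+1), if y + z ≤ s1 ∧ x + z ≤ s2 ∧ x + y ≤ s3 then 1 else 0)
      = if y + z ≤ s1 then min (s2-z) (s3-y) + 1 else 0 := by
  by_cases hyz : y + z ≤ s1
  · simp only [hyz, true_and, if_true]
    rw [← Finset.card_filter]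
    have hfil : (range (s3+1)).filter (fun x => x + z ≤ s2 ∧ x + y ≤ s3)
        = range (min (s2-z) (s3-y) + 1) := by
      ext x
      simp only [Finset.mem_filter, Finset.mem_range]
      omega
    rw [hfil, Finset.card_range]
  · simp [hyz]

lemma cardEqK3 (s1 s2 s3 : ℕ) (h12 : s1 ≤ s2) (h23 : s2 ≤ s3) :
    Nat.card {t : ℕ × ℕ × ℕ //
        t.2.1 + t.2.2 ≤ s1 ∧ t.1 + t.2.2 ≤ s2 ∧ t.1 + t.2.1 ≤ s3}
      = ∑ y ∈ range (s1+1), ∑ z ∈ range (s1+1),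
          if y + z ≤ s1 then min (s2-z) (s3-y) + 1 else 0 := by
  classical
  set F := (range (s3+1) ×ˢ range (s1+1) ×ˢ range (s1+1)).filter
      (fun t : ℕ × ℕ × ℕ => t.2.1 + t.2.2 ≤ s1 ∧ t.1 + t.2.2 ≤ s2 ∧ t.1 + t.2.1 ≤ s3) with hF
  have e : {t : ℕ × ℕ × ℕ //
      t.2.1 + t.2.2 ≤ s1 ∧ t.1 + t.2.2 ≤ s2 ∧ t.1 + t.2.1 ≤ s3} ≃ {t // t ∈ F} := by
    apply Equiv.subtypeEquivRight
    intro t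
    simp only [hF, Finset.mem_filter, Finset.mem_product, Finset.mem_range]
    omega
  rw [Nat.card_congr e, Nat.card_eq_fintype_card, Fintype.card_coe]
  rw [hF, Finset.card_filter, Finset.sum_product]
  simp only [Finset.sum_product]
  rw [Finset.sum_comm]
  apply Finset.sum_congr rfl
  intro y hy
  rw [Finset.sum_comm]
  apply Finset.sum_congr rfl
  intro z hz
  simp only [Finset.mem_range] at hy hz
  exact innerSumK3 s1 s2 s3 y z h12 h23 (by omega) (by omega)

lemma TtopK3 (s1 s2 s3 : ℕ) (h12 : s1 ≤ s2) (h13 : s1 + s2 ≤ s3) :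
    ((∑ y ∈ range (s1+1), ∑ z ∈ range (s1+1),
        if y + z ≤ s1 then min (s2-z) (s3-y) + 1 else 0 : ℕ) : ℚ)
      = ((s1:ℚ)+1)*((s1:ℚ)+2)*(3*(s2:ℚ)-(s1:ℚ)+3)/6 := by
  have h : (∑ y ∈ range (s1+1), ∑ z ∈ range (s1+1),
        if y + z ≤ s1 then min (s2-z) (s3-y) + 1 else 0)
      = ∑ y ∈ range (s1+1), ∑ z ∈ range (s1+1-y), (s2 - z + 1) := by
    apply Finset.sum_congr rfl
    intro y hy
    simp only [Finset.mem_range] at hy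
    have h1 : (∑ z ∈ range (s1+1), if y + z ≤ s1 then min (s2-z) (s3-y) + 1 else 0)
        = ∑ z ∈ range (s1+1), if y + z ≤ s1 then s2 - z + 1 else 0 := by
      apply Finset.sum_congr rfl
      intro z hz
      simp only [Finset.mem_range] at hz
      split_ifs with h2
      · congr 1; omega
      · rfl
    rw [h1, ← Finset.sum_filter]
    apply Finset.sum_congr
    · ext z; simp only [Finset.mem_filter, Finset.mem_range]; omega
    · intros; rfl
  rw [h]
  exact sumA s2 s1 h12

lemma TstepK3 (s1 s2 s3 : ℕ) (h12 : s1 ≤ s2) (h23 : s2 ≤ s3) :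
    (∑ y ∈ range (s1+1), ∑ z ∈ range (s1+1),
        if y + z ≤ s1 then min (s2-z) (s3+1-y) + 1 else 0)
      = (∑ y ∈ range (s1+1), ∑ z ∈ range (s1+1),
          if y + z ≤ s1 then min (s2-z) (s3-y) + 1 else 0)
        + ∑ z ∈ range (s1+1), (s1 + s2 - s3 - 2*z) := by
  have h : ∀ y ∈ range (s1+1), ∀ z ∈ range (s1+1),
      (if y + z ≤ s1 then min (s2-z) (s3+1-y) + 1 else 0)
        = (if y + z ≤ s1 then min (s2-z) (s3-y) + 1 else 0)
          + (if y + z ≤ s1 ∧ s3 + z < s2 + y then 1 else 0) := by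
    intro y hy z hz
    simp only [Finset.mem_range] at hy hz
    split_ifs <;> omega
  calc (∑ y ∈ range (s1+1), ∑ z ∈ range (s1+1),
        if y + z ≤ s1 then min (s2-z) (s3+1-y) + 1 else 0)
      = ∑ y ∈ range (s1+1), ∑ z ∈ range (s1+1),
          ((if y + z ≤ s1 then min (s2-z) (s3-y) + 1 else 0)
            + (if y + z ≤ s1 ∧ s3 + z < s2 + y then 1 else 0)) := by
        apply Finset.sum_congr rfl
        intro y hy
        exact Finset.sum_congr rfl (h y hy)
    _ = (∑ y ∈ range (s1+1), ∑ z ∈ range (s1+1),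
          if y + z ≤ s1 then min (s2-z) (s3-y) + 1 else 0)
        + ∑ y ∈ range (s1+1), ∑ z ∈ range (s1+1),
            (if y + z ≤ s1 ∧ s3 + z < s2 + y then 1 else 0) := by
        rw [← Finset.sum_add_distrib]
        apply Finset.sum_congr rfl
        intros; rw [← Finset.sum_add_distrib]
    _ = _ := by
        congr 1
        rw [Finset.sum_comm]
        apply Finset.sum_congr rfl
        intro z hz
        simp only [Finset.mem_range] at hz
        rw [← Finset.card_filter]
        have hfil : (range (s1+1)).filter (fun y => y + z ≤ s1 ∧ s3 + z < s2 + y)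
            = Finset.Ico (s3 + z + 1 - s2) (s1 + 1 - z) := by
          ext y
          simp only [Finset.mem_filter, Finset.mem_range, Finset.mem_Ico]
          omega
        rw [hfil, Nat.card_Ico]
        omega

lemma descentK3 (s1 s2 : ℕ) (h12 : s1 ≤ s2) : ∀ k : ℕ, ∀ s3 : ℕ, s2 ≤ s3 → s1 + s2 = s3 + k →
    ((∑ y ∈ range (s1+1), ∑ z ∈ range (s1+1),
        if y + z ≤ s1 then min (s2-z) (s3-y) + 1 else 0 : ℕ) : ℚ)
      = ((s1:ℚ)+1)*((s1:ℚ)+2)*(3*(s2:ℚ)-(s1:ℚ)+3)/6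
        - (k:ℚ)*((k:ℚ)+2)*(2*(k:ℚ)+5)/24 - (1 - (-1:ℚ)^k)/16 := by
  intro k
  induction k with
  | zero =>
    intro s3 h23 hs
    rw [TtopK3 s1 s2 s3 h12 (by omega)]
    norm_num
  | succ k ih =>
    intro s3 h23 hs
    have hstep := TstepK3 s1 s2 s3 h12 h23
    have hih := ih (s3+1) (by omega) (by omega)
    have hD : (∑ z ∈ range (s1+1), (s1 + s2 - s3 - 2*z)) = (k+2)^2/4 := by
      have h1 : ∀ z ∈ range (s1+1), s1 + s2 - s3 - 2*z = (k+1) - 2*z := by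
        intro z _; omega
      rw [Finset.sum_congr rfl h1, sumD s1 (k+1) (by omega)]
    rw [hstep, hD] at hih
    push_cast at hih
    have key : ((((k:ℕ)+2)^2/4 : ℕ) : ℚ) = ((k:ℚ)+2)^2/4 - (1 - (-1:ℚ)^k)/8 := by
      rcases Nat.even_or_odd k with ⟨m, rfl⟩ | ⟨m, rfl⟩
      · have h2 : (m+m+2)^2/4 = (m+1)^2 := by
          have h3 : (m+m+2)^2 = 4*(m+1)^2 := by ring
          rw [h3]; omega
        rw [h2]
        have h4 : (-1:ℚ)^(m+m) = 1 := by
          rw [show m+m = 2*m by ring, pow_mul]; norm_num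
        push_cast [h4]
        ring
      · have h2 : (2*m+1+2)^2/4 = m^2+3*m+2 := by
          have h3 : (2*m+1+2)^2 = 4*(m^2+3*m+2)+1 := by ring
          rw [h3]; omega
        rw [h2]
        have h4 : (-1:ℚ)^(2*m+1) = -1 := by
          rw [pow_succ, pow_mul]; norm_num
        push_cast [h4]
        ring
    have key2 : (-1:ℚ)^(k+1) = -(-1:ℚ)^k := by rw [pow_succ]; ring
    rw [key2]
    rw [key] at hih
    push_cast
    linarith [hih]

/-- Number of lattice points in the fractional s-matching polytope of K₃. -/
theorem three_point_count (s1 s2 s3 : ℕ) (h12 : s1 ≤ s2) (h23 : s2 ≤ s3)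
    (p : ℕ) (hp : p = s1 + s2 - s3) :
    (Nat.card {t : ℕ × ℕ × ℕ //
        t.2.1 + t.2.2 ≤ s1 ∧ t.1 + t.2.2 ≤ s2 ∧ t.1 + t.2.1 ≤ s3} : ℚ)
      = ((s1 : ℚ) + 1) * ((s1 : ℚ) + 2) * (3 * (s2 : ℚ) - (s1 : ℚ) + 3) / 6
        - (p : ℚ) * ((p : ℚ) + 2) * (2 * (p : ℚ) + 5) / 24
        - (1 - (-1 : ℚ) ^ p) / 16 := by
  rw [cardEqK3 s1 s2 s3 h12 h23]
  rcases le_or_gt (s1 + s2) s3 with h | h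
  · have hp0 : p = 0 := by omega
    subst hp0
    rw [TtopK3 s1 s2 s3 h12 h]
    norm_num
  · have hps : s1 + s2 = s3 + p := by omega
    exact descentK3 s1 s2 h12 p s3 h23 hps
end

section
/- Let s1 ≤ s2 ≤ s3 be nonnegative integers with s1 + s2 ≤ s3. Then the number of triples (x,y,z) of nonnegative integers satisfying y+z ≤ s1, x+z ≤ s2, and x+y ≤ s3 equals (s1+1)(s1+2)(3·s2 − s1 + 3)/6. -/
/-!
Since `x ≤ s2` and `y ≤ s1`, the constraint `x + y ≤ s3` follows from `s1 + s2 ≤ s3`. For fixed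
`z ≤ s1` the remaining constraints cut out a `(s2 + 1 - z) × (s1 + 1 - z)` rectangle of pairs
`(x, y)`, and the sum of these rectangle areas peels off one layer `z = 0` at a time.
-/

open Finset

def prodSigmaLastEquiv : ℕ × ℕ × ℕ ≃ Σ _ : ℕ, ℕ × ℕ where
  toFun t := ⟨t.2.2, (t.1, t.2.1)⟩
  invFun p := (p.2.1, p.2.2, p.1)
  left_inv _ := rfl
  right_inv _ := rfl

theorem card_triples_eq_sum_rectangles (a b : ℕ) :
    Nat.card {t : ℕ × ℕ × ℕ // t.2.1 + t.2.2 ≤ a ∧ t.1 + t.2.2 ≤ b}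
      = ∑ z ∈ range (a + 1), (b + 1 - z) * (a + 1 - z) := by
  let slices : Finset (Σ _ : ℕ, ℕ × ℕ) :=
    (range (a + 1)).sigma fun z => range (b + 1 - z) ×ˢ range (a + 1 - z)
  have hslices : ∀ t : ℕ × ℕ × ℕ,
      t.2.1 + t.2.2 ≤ a ∧ t.1 + t.2.2 ≤ b ↔ prodSigmaLastEquiv t ∈ slices := by
    rintro ⟨x, y, z⟩
    simp only [prodSigmaLastEquiv, Equiv.coe_fn_mk, slices, mem_sigma, mem_product, mem_range]
    omega
  rw [Nat.card_congr (prodSigmaLastEquiv.subtypeEquiv hslices), Nat.card_eq_finsetCard,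
    card_sigma]
  simp only [card_product, card_range]

theorem six_mul_sum_rectangles (a d : ℕ) :
    6 * ∑ z ∈ range (a + 1), (a + d + 1 - z) * (a + 1 - z)
      = (a + 1) * (a + 2) * (2 * a + 3 * d + 3) := by
  induction a with
  | zero => simp only [zero_add, sum_range_one, Nat.sub_zero]; ring
  | succ a ih =>
    rw [sum_range_succ', mul_add]
    simp only [Nat.add_sub_add_right, show a + 1 + d + 1 = a + d + 1 + 1 by ring, ih,
      Nat.sub_zero]
    ring

theorem three_point_count_easy_general (s1 s2 s3 : ℕ) (h12 : s1 ≤ s2)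
    (h : s1 + s2 ≤ s3) :
    (Nat.card {t : ℕ × ℕ × ℕ //
        t.2.1 + t.2.2 ≤ s1 ∧ t.1 + t.2.2 ≤ s2 ∧ t.1 + t.2.1 ≤ s3} : ℚ)
      = ((s1 : ℚ) + 1) * ((s1 : ℚ) + 2) * (3 * (s2 : ℚ) - (s1 : ℚ) + 3) / 6 := by
  have hthird : ∀ t : ℕ × ℕ × ℕ,
      t.2.1 + t.2.2 ≤ s1 ∧ t.1 + t.2.2 ≤ s2 ∧ t.1 + t.2.1 ≤ s3 ↔
        t.2.1 + t.2.2 ≤ s1 ∧ t.1 + t.2.2 ≤ s2 := fun _ => by omega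
  obtain ⟨d, rfl⟩ := Nat.exists_eq_add_of_le h12
  have hcount := six_mul_sum_rectangles s1 d
  rw [← card_triples_eq_sum_rectangles, ← Nat.card_congr (Equiv.subtypeEquivRight hthird)]
    at hcount
  have hcountQ := congrArg (Nat.cast : ℕ → ℚ) hcount
  push_cast at hcountQ ⊢
  rw [eq_div_iff (by norm_num)]
  linear_combination hcountQ

/-- Special case of the three-point count where `x + y ≤ s3` is automatic. -/
theorem three_point_count_easy (s1 s2 s3 : ℕ) (h12 : s1 ≤ s2) (h23 : s2 ≤ s3)
    (h : s1 + s2 ≤ s3) :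
    (Nat.card {t : ℕ × ℕ × ℕ //
        t.2.1 + t.2.2 ≤ s1 ∧ t.1 + t.2.2 ≤ s2 ∧ t.1 + t.2.1 ≤ s3} : ℚ)
      = ((s1 : ℚ) + 1) * ((s1 : ℚ) + 2) * (3 * (s2 : ℚ) - (s1 : ℚ) + 3) / 6 :=
  three_point_count_easy_general s1 s2 s3 h12 h
end

section
/- For n = 4 and b = (b1,b2,b3,b4) ∈ Z_{≥0}^4 with b1+b2+b3+b4 even and b4 < min(b2+b3−b1, b1+b3−b2, b1+b2−b3), the number of symmetric 4×4 nonnegative integer matrices with zero diagonal and row sums b1,b2,b3,b4 equals (b4+2 choose 2). -/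
/-!
Write `2s = b₁ + b₂ + b₃ + b₄`. Comparing the row sums of a pair `{i, j}` with those of the
complementary pair `{l, m}` gives `x_ij = x_lm + (s - b_l - b_m)`, and the chamber inequalities
make these three offsets nonnegative. Hence a solution is determined by its last row
`(x₁₄, x₂₄, x₃₄)`, which can be any composition of `b₄` into three parts, and there are
`(b₄ + 2).choose 2` of those by stars and bars.
-/

theorem card_fun_sum_eq_choose (α : Type*) [Fintype α] [DecidableEq α] (n : ℕ) :
    Nat.card {x : α → ℕ // ∑ i, x i = n} = (Fintype.card α + n - 1).choose n := by
  rw [← Nat.card_congr (Sym.equivNatSumOfFintype α n), Nat.card_eq_fintype_card,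
    Sym.card_sym_eq_choose]

section K4Matrix

variable {α : Type*} [Zero α] (x12 x13 x14 x23 x24 x34 : α)

def k4Matrix : Matrix (Fin 4) (Fin 4) α :=
  !![0, x12, x13, x14; x12, 0, x23, x24; x13, x23, 0, x34; x14, x24, x34, 0]

theorem k4Matrix_isSymm : (k4Matrix x12 x13 x14 x23 x24 x34).IsSymm := by
  ext i j
  fin_cases i <;> fin_cases j <;> rfl

theorem k4Matrix_apply_self (i : Fin 4) : k4Matrix x12 x13 x14 x23 x24 x34 i i = 0 := by
  fin_cases i <;> rfl

theorem eq_k4Matrix {M : Matrix (Fin 4) (Fin 4) α} (hs : M.IsSymm) (hd : ∀ i, M i i = 0) :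
    M = k4Matrix (M 0 1) (M 0 2) (M 0 3) (M 1 2) (M 1 3) (M 2 3) := by
  ext i j
  fin_cases i <;> fin_cases j <;> first | rfl | exact hd _ | exact hs.apply _ _

end K4Matrix

theorem sum_k4Matrix_row {α : Type*} [AddCommMonoid α] (x12 x13 x14 x23 x24 x34 : α)
    (i : Fin 4) :
    ∑ j, k4Matrix x12 x13 x14 x23 x24 x34 i j =
      ![x12 + x13 + x14, x12 + x23 + x24, x13 + x23 + x34, x14 + x24 + x34] i := by
  fin_cases i <;> simp [k4Matrix, Fin.sum_univ_four, add_assoc]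

theorem sum_k4Matrix_row_eq_iff {b1 b2 b3 b4 s x12 x13 x14 x23 x24 x34 : ℕ}
    (hk : b1 + b2 + b3 + b4 = s + s)
    (h1 : b4 + b1 ≤ b2 + b3) (h2 : b4 + b2 ≤ b1 + b3) (h3 : b4 + b3 ≤ b1 + b2) :
    (∀ i, ∑ j, k4Matrix x12 x13 x14 x23 x24 x34 i j = ![b1, b2, b3, b4] i) ↔
      x14 + x24 + x34 = b4 ∧ x23 = x14 + (s - b1 - b4) ∧ x13 = x24 + (s - b2 - b4) ∧
        x12 = x34 + (s - b3 - b4) := by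
  simp only [sum_k4Matrix_row, Fin.forall_fin_succ, IsEmpty.forall_iff, Fin.isValue,
    Matrix.cons_val_zero, Fin.succ_zero_eq_one, Matrix.cons_val_one, Fin.succ_one_eq_two,
    Matrix.cons_val, Fin.reduceSucc, and_true]
  omega

def k4LastRowEquiv {b1 b2 b3 b4 s : ℕ} (hk : b1 + b2 + b3 + b4 = s + s)
    (h1 : b4 + b1 ≤ b2 + b3) (h2 : b4 + b2 ≤ b1 + b3) (h3 : b4 + b3 ≤ b1 + b2) :
    {M : Matrix (Fin 4) (Fin 4) ℕ //
        M.IsSymm ∧ (∀ i, M i i = 0) ∧ ∀ i, ∑ j, M i j = ![b1, b2, b3, b4] i} ≃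
      {x : Fin 3 → ℕ // ∑ i, x i = b4} where
  toFun M := ⟨fun i => M.1 3 i.castSucc, by
    obtain ⟨M, -, hd, hr⟩ := M
    simpa [Fin.sum_univ_castSucc, hd] using hr 3⟩
  invFun x := ⟨k4Matrix (x.1 2 + (s - b3 - b4)) (x.1 1 + (s - b2 - b4)) (x.1 0)
      (x.1 0 + (s - b1 - b4)) (x.1 1) (x.1 2),
    k4Matrix_isSymm .., k4Matrix_apply_self _ _ _ _ _ _, (sum_k4Matrix_row_eq_iff hk h1 h2 h3).2
      ⟨by simpa [Fin.sum_univ_three] using x.2, rfl, rfl, rfl⟩⟩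
  left_inv M := by
    obtain ⟨M, hs, hd, hr⟩ := M
    obtain ⟨-, h23, h13, h12⟩ :=
      (sum_k4Matrix_row_eq_iff hk h1 h2 h3).1 (eq_k4Matrix hs hd ▸ hr)
    ext1
    change k4Matrix (M 3 2 + _) (M 3 1 + _) (M 3 0) (M 3 0 + _) (M 3 1) (M 3 2) = M
    rw [hs.apply 0 3, hs.apply 1 3, hs.apply 2 3, ← h23, ← h13, ← h12]
    exact (eq_k4Matrix hs hd).symm
  right_inv x := by
    ext i
    fin_cases i <;> rfl

/-- Chamber 4 of the vector partition function for the incidence matrix of K₄. -/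
theorem K4_chamber_four (b1 b2 b3 b4 : ℕ)
    (heven : Even (b1 + b2 + b3 + b4))
    (h1 : b4 + b1 < b2 + b3) (h2 : b4 + b2 < b1 + b3) (h3 : b4 + b3 < b1 + b2) :
    Nat.card {M : Matrix (Fin 4) (Fin 4) ℕ //
        M.IsSymm ∧ (∀ i, M i i = 0) ∧ ∀ i, ∑ j, M i j = ![b1, b2, b3, b4] i}
      = Nat.choose (b4 + 2) 2 := by
  obtain ⟨s, hk⟩ := heven
  rw [Nat.card_congr (k4LastRowEquiv hk h1.le h2.le h3.le), card_fun_sum_eq_choose,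
    Fintype.card_fin, show 3 + b4 - 1 = b4 + 2 by omega, Nat.choose_symm_add]
end

section
/- Let s be a nonnegative even integer. Define N(s,s,s) = (s+1)(s+2)(2s+3)/6 − p(p+2)(2p+5)/24 with p = s. Then ⌊s/2⌋+1 + (⌊s/2⌋+1)(s − ⌊s/2⌋/2) + (1/6)[N(s,s,s) − 3(⌊s/2⌋+1)(s − ⌊s/2⌋/2) − ⌊s/2⌋ − 1] = (1/4)·C(s+4,3), where C denotes the binomial coefficient. -/
/-- Arithmetic identity for the Bose-symmetric dimension count at three equal even spins. -/
theorem bose_even_identity (s : ℕ) (hs : Even s)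
    (N : ℚ)
    (hN : N = ((s : ℚ) + 1) * ((s : ℚ) + 2) * (2 * (s : ℚ) + 3) / 6
            - (s : ℚ) * ((s : ℚ) + 2) * (2 * (s : ℚ) + 5) / 24) :
    ((s / 2 : ℕ) : ℚ) + 1
      + (((s / 2 : ℕ) : ℚ) + 1) * ((s : ℚ) - ((s / 2 : ℕ) : ℚ) / 2)
      + (1 / 6) * (N - 3 * (((s / 2 : ℕ) : ℚ) + 1) * ((s : ℚ) - ((s / 2 : ℕ) : ℚ) / 2)
          - ((s / 2 : ℕ) : ℚ) - 1)
      = (1 / 4) * (Nat.choose (s + 4) 3 : ℚ) := by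
  obtain ⟨k, rfl⟩ := hs
  have h1 : (k + k) / 2 = k := by omega
  have h2 : (k + k + 4).choose 3 = (k + k + 4) * (k + k + 3) * (k + k + 2) / 6 := by
    rw [Nat.choose_eq_descFactorial_div_factorial]
    simp [Nat.descFactorial, Nat.factorial]; ring_nf
  have h3 : ((k + k + 4).choose 3 : ℚ)
      = ((k : ℚ) + k + 4) * ((k : ℚ) + k + 3) * ((k : ℚ) + k + 2) / 6 := by
    rw [h2]
    have : 6 ∣ (k + k + 4) * (k + k + 3) * (k + k + 2) := by
      have := Nat.factorial_dvd_descFactorial (k + k + 4) 3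
      simpa [Nat.descFactorial, Nat.factorial, mul_comm, mul_assoc, mul_left_comm] using this
    rw [Nat.cast_div this (by norm_num)]
    push_cast
    ring
  rw [h1, h3, hN]
  push_cast
  ring
end
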